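/- arXiv:1601.06502 — 2 statements merged into one kernel-verified Lean document; each statement's English description precedes it below -/
import Mathlib

section
/- Let F be a field of characteristic 2, let t ∈ F satisfy t·(t+1)·(t²+t+1) ≠ 0, and set t₁ = t/(t²+t+1), t₂ = (1+t)/(t²+t+1), t₃ = t·(1+t)/(t²+t+1). Let a, b, c ∈ F with c ≠ 0, and for j = 1, 2, 3 set x_j = t_j·c and h_j = b·x_j⁻² + x_j + a. Then h₁ + h₂ + h₃ = c + a. -/
/-!
The three candidates satisfy `x₁ + x₂ + x₃ = c` and `x₁⁻¹ = x₂⁻¹ + x₃⁻¹`. Squaring is additive in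
characteristic 2, so the terms `b·x_j⁻²` cancel in pairs, and `3a = a`.
-/

section CharTwo

variable {F : Type*} [Field F] [CharP F 2]

theorem CharTwo.sum_mul_inv_sq_add_add_of_inv_eq_add_inv {x y z : F} (a b : F)
    (hinv : x⁻¹ = y⁻¹ + z⁻¹) :
    (b * (x⁻¹) ^ 2 + x + a) + (b * (y⁻¹) ^ 2 + y + a) + (b * (z⁻¹) ^ 2 + z + a)
      = x + y + z + a := by
  have hsq : (x⁻¹) ^ 2 = (y⁻¹) ^ 2 + (z⁻¹) ^ 2 := by rw [hinv, CharTwo.add_sq]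
  linear_combination b * hsq + (b * ((y⁻¹) ^ 2 + (z⁻¹) ^ 2) + a) * CharTwo.two_eq_zero (R := F)

theorem CharTwo.div_add_div_add_div_eq_one {t : F} (ht : t ^ 2 + t + 1 ≠ 0) :
    t / (t ^ 2 + t + 1) + (1 + t) / (t ^ 2 + t + 1) + t * (1 + t) / (t ^ 2 + t + 1) = 1 := by
  rw [← add_div, ← add_div, div_eq_one_iff_eq ht]
  linear_combination t * CharTwo.two_eq_zero (R := F)

end CharTwo

theorem inv_div_eq_inv_add_inv {F : Type*} [Field F] {t : F} (d : F) (ht₀ : t ≠ 0)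
    (ht₁ : 1 + t ≠ 0) : (t / d)⁻¹ = ((1 + t) / d)⁻¹ + (t * (1 + t) / d)⁻¹ := by
  simp only [inv_div]
  field_simp
  ring

theorem swchar2_h_sum_general {F : Type*} [Field F] [CharP F 2] (t a b c : F)
    (ht : t * (t + 1) * (t ^ 2 + t + 1) ≠ 0) :
    let t₁ := t / (t ^ 2 + t + 1)
    let t₂ := (1 + t) / (t ^ 2 + t + 1)
    let t₃ := t * (1 + t) / (t ^ 2 + t + 1)
    let x₁ := t₁ * c
    let x₂ := t₂ * c
    let x₃ := t₃ * c
    (b * (x₁⁻¹) ^ 2 + x₁ + a) + (b * (x₂⁻¹) ^ 2 + x₂ + a) + (b * (x₃⁻¹) ^ 2 + x₃ + a)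
      = c + a := by
  intro t₁ t₂ t₃ x₁ x₂ x₃
  obtain ⟨⟨ht₀, ht₁⟩, hd⟩ : (t ≠ 0 ∧ t + 1 ≠ 0) ∧ t ^ 2 + t + 1 ≠ 0 := by
    simpa only [mul_ne_zero_iff] using ht
  have hinv : x₁⁻¹ = x₂⁻¹ + x₃⁻¹ := by
    simp only [x₁, x₂, x₃, t₁, t₂, t₃, mul_inv, ← add_mul,
      inv_div_eq_inv_add_inv _ ht₀ (by rwa [add_comm])]
  rw [CharTwo.sum_mul_inv_sq_add_add_of_inv_eq_add_inv a b hinv]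
  simp only [x₁, x₂, x₃, ← add_mul, t₁, t₂, t₃, CharTwo.div_add_div_add_div_eq_one hd, one_mul]

/-- The three trace-test quantities `h_j = b·x_j⁻² + x_j + a` of SWChar2, with
`x_j = t_j·c`, sum to `c + a`. -/
theorem swchar2_h_sum {F : Type*} [Field F] [CharP F 2] (t a b c : F)
    (ht : t * (t + 1) * (t ^ 2 + t + 1) ≠ 0) (hc : c ≠ 0) :
    let t₁ := t / (t ^ 2 + t + 1)
    let t₂ := (1 + t) / (t ^ 2 + t + 1)
    let t₃ := t * (1 + t) / (t ^ 2 + t + 1)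
    let x₁ := t₁ * c
    let x₂ := t₂ * c
    let x₃ := t₃ * c
    (b * (x₁⁻¹) ^ 2 + x₁ + a) + (b * (x₂⁻¹) ^ 2 + x₂ + a) + (b * (x₃⁻¹) ^ 2 + x₃ + a)
      = c + a :=
  swchar2_h_sum_general t a b c ht
end

section
/- Let T be an additive commutative cancellative monoid. Define a relation on T × T by (a₊, a₋) ≈ (b₊, b₋) if and only if a₊ + b₋ = a₋ + b₊; this is an equivalence relation, and the quotient G = (T × T)/≈ with addition ⟦(a₊, a₋)⟧ + ⟦(b₊, b₋)⟧ = ⟦(a₊ + b₊, a₋ + b₋)⟧ and negation −⟦(a₊, a₋)⟧ = ⟦(a₋, a₊)⟧ is an additive commutative group. Moreover, given a type A and an additive monoid homomorphism H : (A →₀ ℕ) → T, the map H' : (A →₀ ℤ) → G defined by H'(M) = ⟦(H(M⁺), H(M⁻))⟧ — where M⁺(a) = max(M(a), 0) and M⁻(a) = max(−M(a), 0), viewed as finitely supported ℕ-valued functions — is an additive group homomorphism: H'(M₁ + M₂) = H'(M₁) + H'(M₂) for all M₁, M₂ : A →₀ ℤ. Finally, the map φ : T → G given by φ(a) = ⟦(a,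 0)⟧ is an injective additive monoid homomorphism. -/
/-! The only real work is the additivity of `H'`. Writing `m = m⁺ - m⁻`, the equality
`(m + n)⁺ - (m + n)⁻ = (m⁺ + n⁺) - (m⁻ + n⁻)` of integers becomes, after moving every term to the
side where it is added, the identity `m⁺ + n⁺ + (m + n)⁻ = m⁻ + n⁻ + (m + n)⁺` of natural numbers.
Applied pointwise to multisets and pushed through the additive map `H`, it is exactly the
Grothendieck relation between `H'(M₁ + M₂)` and `H'(M₁) + H'(M₂)`. -/

/-- The Grothendieck relation on `T × T`: `(a₊, a₋) ≈ (b₊, b₋)` iff `a₊ + b₋ = a₋ + b₊`. -/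
instance grothendieckSetoid (T : Type*) [AddCancelCommMonoid T] : Setoid (T × T) where
  r p q := p.1 + q.2 = p.2 + q.1
  iseqv := by
    constructor
    · intro p
      exact add_comm _ _
    · intro p q h
      rw [add_comm, ← h, add_comm]
    · intro p q s h1 h2
      have key : (p.1 + s.2) + (q.1 + q.2) = (p.2 + s.1) + (q.1 + q.2) := by
        calc (p.1 + s.2) + (q.1 + q.2) = (p.1 + q.2) + (q.1 + s.2) := by abel
          _ = (p.2 + q.1) + (q.2 + s.1) := by rw [h1, h2]
          _ = (p.2 + s.1) + (q.1 + q.2) := by abel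
      exact add_right_cancel key

/-- The Grothendieck group of a cancellative commutative monoid `T`, with positive and
negative parts tracked separately. -/
abbrev GrothendieckQuot (T : Type*) [AddCancelCommMonoid T] :=
  Quotient (grothendieckSetoid T)

instance (T : Type*) [AddCancelCommMonoid T] : Zero (GrothendieckQuot T) :=
  ⟨⟦(0, 0)⟧⟩

instance (T : Type*) [AddCancelCommMonoid T] : Add (GrothendieckQuot T) :=
  ⟨Quotient.map₂ (fun p q => (p.1 + q.1, p.2 + q.2)) (by
    intro p p' hp q q' hq
    show (p.1 + q.1) + (p'.2 + q'.2) = (p.2 + q.2) + (p'.1 + q'.1)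
    calc (p.1 + q.1) + (p'.2 + q'.2) = (p.1 + p'.2) + (q.1 + q'.2) := by abel
      _ = (p.2 + p'.1) + (q.2 + q'.1) := by rw [hp, hq]
      _ = (p.2 + q.2) + (p'.1 + q'.1) := by abel)⟩

instance (T : Type*) [AddCancelCommMonoid T] : Neg (GrothendieckQuot T) :=
  ⟨Quotient.map (fun p => (p.2, p.1)) (by
    intro p q h
    exact h.symm)⟩

instance GrothendieckQuot.addCommGroup (T : Type*) [AddCancelCommMonoid T] :
    AddCommGroup (GrothendieckQuot T) where
  add := (· + ·)
  zero := 0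
  neg := Neg.neg
  nsmul := nsmulRec
  zsmul := zsmulRec
  add_assoc := by
    intro a b c
    induction a using Quotient.ind
    induction b using Quotient.ind
    induction c using Quotient.ind
    apply Quotient.sound
    show _ + _ = _ + _
    abel_nf
    first | ac_rfl | (simp only [zero_add, add_zero] <;> ac_rfl) | (simp <;> ac_rfl)
  zero_add := by
    intro a
    induction a using Quotient.ind
    apply Quotient.sound
    show _ + _ = _ + _
    abel_nf
    first | ac_rfl | (simp only [zero_add, add_zero] <;> ac_rfl) | (simp <;> ac_rfl)
  add_zero := by
    intro a
    induction a using Quotient.ind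
    apply Quotient.sound
    show _ + _ = _ + _
    abel_nf
    first | ac_rfl | (simp only [zero_add, add_zero] <;> ac_rfl) | (simp <;> ac_rfl)
  neg_add_cancel := by
    intro a
    induction a using Quotient.ind
    apply Quotient.sound
    show _ + _ = _ + _
    abel_nf
  add_comm := by
    intro a b
    induction a using Quotient.ind
    induction b using Quotient.ind
    apply Quotient.sound
    show _ + _ = _ + _
    abel_nf

/-- The positive part of an integer-valued finitely supported function, as an
ℕ-valued finitely supported function: `M⁺(a) = max(M(a), 0)`. -/
noncomputable def Finsupp.posPart {A : Type*} (M : A →₀ ℤ) : A →₀ ℕ :=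
  M.mapRange Int.toNat Int.toNat_zero

/-- The extension of a monoid-homomorphic multiset hash `H : (A →₀ ℕ) →+ T` to
integer multiplicities, with values in the Grothendieck group of `T`:
`H'(M) = ⟦(H(M⁺), H(M⁻))⟧`. -/
noncomputable def extendedHash {A T : Type*} [AddCancelCommMonoid T]
    (H : (A →₀ ℕ) →+ T) : (A →₀ ℤ) → GrothendieckQuot T :=
  fun M => ⟦(H M.posPart, H (-M).posPart)⟧

namespace GrothendieckQuot

variable {T : Type*} [AddCancelCommMonoid T]

theorem mk_add_mk (p q : T × T) :
    (⟦p⟧ + ⟦q⟧ : GrothendieckQuot T) = ⟦(p.1 + q.1, p.2 + q.2)⟧ :=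
  rfl

theorem neg_mk (p : T × T) : (-⟦p⟧ : GrothendieckQuot T) = ⟦(p.2, p.1)⟧ :=
  rfl

theorem mk_eq_mk_iff {p q : T × T} :
    (⟦p⟧ : GrothendieckQuot T) = ⟦q⟧ ↔ p.1 + q.2 = p.2 + q.1 :=
  Quotient.eq

variable (T) in
def of : T →+ GrothendieckQuot T where
  toFun a := ⟦(a, 0)⟧
  map_zero' := rfl
  map_add' a b := mk_eq_mk_iff.mpr (by simp [add_comm])

theorem of_injective : Function.Injective (of T) := fun a b h => by
  simpa using mk_eq_mk_iff.mp h

end GrothendieckQuot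

theorem Int.toNat_add_add_toNat_neg_add_toNat_neg (m n : ℤ) :
    (m + n).toNat + ((-m).toNat + (-n).toNat) = (-(m + n)).toNat + (m.toNat + n.toNat) := by
  omega

theorem Finsupp.posPart_add_add_posPart_neg_add_posPart_neg {A : Type*} (M₁ M₂ : A →₀ ℤ) :
    (M₁ + M₂).posPart + ((-M₁).posPart + (-M₂).posPart) =
      (-(M₁ + M₂)).posPart + (M₁.posPart + M₂.posPart) := by
  ext a
  simpa [Finsupp.posPart] using Int.toNat_add_add_toNat_neg_add_toNat_neg (M₁ a) (M₂ a)

theorem extendedHash_add {A T : Type*} [AddCancelCommMonoid T] (H : (A →₀ ℕ) →+ T)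
    (M₁ M₂ : A →₀ ℤ) :
    extendedHash H (M₁ + M₂) = extendedHash H M₁ + extendedHash H M₂ := by
  refine GrothendieckQuot.mk_eq_mk_iff.mpr ?_
  simp only [← map_add]
  exact congrArg H (Finsupp.posPart_add_add_posPart_neg_add_posPart_neg M₁ M₂)

/-- Appendix C: the Grothendieck relation is an equivalence relation; the quotient
`G = (T × T)/≈` with `⟦p⟧ + ⟦q⟧ = ⟦(p₊ + q₊, p₋ + q₋)⟧` and `-⟦p⟧ = ⟦(p₋, p₊)⟧` is an
additive commutative group (witnessed by the instance above, whose operations act as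
stated); any additive monoid homomorphism `H : (A →₀ ℕ) →+ T` extends to a
group-homomorphic multiset hash `H' : (A →₀ ℤ) → G`,
`H'(M) = ⟦(H(M⁺), H(M⁻))⟧`; and `φ(a) = ⟦(a, 0)⟧` is an injective additive monoid
homomorphism embedding `T` into `G`. -/
theorem grothendieck_multiset_hash {A T : Type*} [AddCancelCommMonoid T]
    (H : (A →₀ ℕ) →+ T) :
    Equivalence (fun p q : T × T => p.1 + q.2 = p.2 + q.1) ∧
    (∀ p q : T × T,
      (⟦p⟧ + ⟦q⟧ : GrothendieckQuot T) = ⟦(p.1 + q.1, p.2 + q.2)⟧) ∧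
    (∀ p : T × T, (-⟦p⟧ : GrothendieckQuot T) = ⟦(p.2, p.1)⟧) ∧
    (∀ M₁ M₂ : A →₀ ℤ,
      extendedHash H (M₁ + M₂) = extendedHash H M₁ + extendedHash H M₂) ∧
    Function.Injective (fun a : T => (⟦(a, 0)⟧ : GrothendieckQuot T)) ∧
    ((⟦((0 : T), (0 : T))⟧ : GrothendieckQuot T) = 0 ∧
      ∀ a b : T, (⟦(a + b, 0)⟧ : GrothendieckQuot T) = ⟦(a, 0)⟧ + ⟦(b, 0)⟧) :=
  ⟨(grothendieckSetoid T).iseqv, GrothendieckQuot.mk_add_mk, GrothendieckQuot.neg_mk,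
    extendedHash_add H, GrothendieckQuot.of_injective, rfl, map_add (GrothendieckQuot.of T)⟩
end
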